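/- Let 1 ≤ i ≤ s and write ξ_i = (k,t). If (a,b) ∈ B_i^{(1.1)} and (b,c) ∈ B_i^{(1.2)} of type (c) (i.e. (b,c) ∈ B_i, 1 < b < k, t < c < k, and (b,t) ∉ B_{i−1} or (k,c) ∉ B_{i−1}), then (a,c) ∈ B_i^{(1.1)}. -/

import Mathlib

open Finset MvPolynomial

namespace Panov

/-- The set `A` of places `(i,j)` with `n ≥ i > j ≥ 1`. -/
def placesA (n : ℕ) : Finset (ℕ × ℕ) :=
  (Finset.range (n + 1) ×ˢ Finset.range (n + 1)).filter fun p => 1 ≤ p.2 ∧ p.2 < p.1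

/-- The rank of a place in the linear order `≻`:
`η ≻ ζ` iff `ordA n η < ordA n ζ`. -/
def ordA (n : ℕ) (p : ℕ × ℕ) : ℕ := p.2 * (n + 1) + (n - p.1)

/-- The `≻`-greatest element of a (nonempty) set `B` of places:
the element with the minimal value of `ordA`. -/
def xiOf (n : ℕ) (B : Finset (ℕ × ℕ)) : ℕ × ℕ :=
  let m := WithTop.untopD 0 ((B.image (ordA n)).min)
  (n - m % (n + 1), m / (n + 1))

/-- The places that get the symbol `−` at the current step, when the
current set of unfilled places is `B`. -/
def minusSet (n : ℕ) (B : Finset (ℕ × ℕ)) : Finset (ℕ × ℕ) :=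
  B.filter fun p =>
    p.1 = (xiOf n B).1 ∧ (xiOf n B).2 < p.2 ∧ p.2 < (xiOf n B).1 ∧ (p.2, (xiOf n B).2) ∈ B

/-- The places that get the symbol `+` at the current step. -/
def plusSet (n : ℕ) (B : Finset (ℕ × ℕ)) : Finset (ℕ × ℕ) :=
  B.filter fun p =>
    p.2 = (xiOf n B).2 ∧ (xiOf n B).2 < p.1 ∧ p.1 < (xiOf n B).1 ∧ ((xiOf n B).1, p.1) ∈ B

/-- `Bset n M i` is the set of places unfilled after step `i` of the diagram. -/
def Bset (n : ℕ) (M : Finset (ℕ × ℕ)) : ℕ → Finset (ℕ × ℕ)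
  | 0 => placesA n \ M
  | i + 1 =>
      Bset n M i \
        insert (xiOf n (Bset n M i)) (minusSet n (Bset n M i) ∪ plusSet n (Bset n M i))

/-- `ξ_i`, the place that receives `⊗` at step `i ≥ 1`. -/
def xiStep (n : ℕ) (M : Finset (ℕ × ℕ)) (i : ℕ) : ℕ × ℕ := xiOf n (Bset n M (i - 1))

/-- `C_i⁻`, the places filled with `−` at step `i ≥ 1`. -/
def Cminus (n : ℕ) (M : Finset (ℕ × ℕ)) (i : ℕ) : Finset (ℕ × ℕ) :=
  minusSet n (Bset n M (i - 1))

/-- `C_i⁺`, the places filled with `+` at step `i ≥ 1`. -/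
def Cplus (n : ℕ) (M : Finset (ℕ × ℕ)) (i : ℕ) : Finset (ℕ × ℕ) :=
  plusSet n (Bset n M (i - 1))

/-- `M ⊆ A` spans an ideal `𝔪` of `𝔫 = ut(n,K)`. -/
def IsIdealSet (n : ℕ) (M : Finset (ℕ × ℕ)) : Prop :=
  M ⊆ placesA n ∧
    (∀ p ∈ M, ∀ d, 1 ≤ d → d < p.2 → (p.1, d) ∈ M) ∧
    (∀ p ∈ M, ∀ c, p.1 < c → c ≤ n → (c, p.2) ∈ M)

/-- `s` is the number of steps after which the diagram is complete. -/
def IsNumSteps (n : ℕ) (M : Finset (ℕ × ℕ)) (s : ℕ) : Prop :=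
  Bset n M s = ∅ ∧ ∀ j < s, (Bset n M j).Nonempty



/-- `(a,b) ∈ B_i^{(1.1)}` (relative to `ξ_i = (k,t)`):  `(a,b) ∈ B_i`,
`1 < a < k`, `t < b < k`, and both `(a,t)` and `(k,b)` lie in `B_{i−1}`. -/
def memB11 (n : ℕ) (M : Finset (ℕ × ℕ)) (i k t : ℕ) (q : ℕ × ℕ) : Prop :=
  q ∈ Bset n M i ∧ 1 < q.1 ∧ q.1 < k ∧ t < q.2 ∧ q.2 < k ∧
    (q.1, t) ∈ Bset n M (i - 1) ∧ (k, q.2) ∈ Bset n M (i - 1)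

/-- `(a,b) ∈ B_i^{(1.2)}` of type (c) (relative to `ξ_i = (k,t)`):
`(a,b) ∈ B_i`, `1 < a < k`, `t < b < k`, and `(a,t) ∉ B_{i−1}` or
`(k,b) ∉ B_{i−1}`. -/
def memB12c (n : ℕ) (M : Finset (ℕ × ℕ)) (i k t : ℕ) (q : ℕ × ℕ) : Prop :=
  q ∈ Bset n M i ∧ 1 < q.1 ∧ q.1 < k ∧ t < q.2 ∧ q.2 < k ∧
    ((q.1, t) ∉ Bset n M (i - 1) ∨ (k, q.2) ∉ Bset n M (i - 1))

/-!
The unfilled places behave like a transitive relation: if `(x,y)` and `(y,z)` are unfilled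
after step `j`, then `(x,z)` is unfilled or lies in `M`. This survives a step, because a step
filling `(x,z)` with `⊗`, `−` or `+` would, by the same property one step earlier, also fill
`(x,y)` or `(y,z)`. Since the `≻`-greatest unfilled place `ξ = (k,t)` is not in the ideal `M`,
no `(x,z)` with `x ≤ k` and `t ≤ z` is in `M` either; so the unfilled places are transitive
below row `k` and along row `k`. This puts `(a,c)` and `(k,c)` in `B_{i-1}`, and step `i` only
fills places in row `k` or column `t`.
-/

def fillStep (n : ℕ) (B : Finset (ℕ × ℕ)) : Finset (ℕ × ℕ) :=
  B \ insert (xiOf n B) (minusSet n B ∪ plusSet n B)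

def IsTransBelow (B : Finset (ℕ × ℕ)) (k : ℕ) : Prop :=
  ∀ ⦃x y z⦄, (x, y) ∈ B → (y, z) ∈ B → x < k → (x, z) ∈ B

def IsRowClosed (B : Finset (ℕ × ℕ)) (k t : ℕ) : Prop :=
  ∀ ⦃b c⦄, (k, b) ∈ B → (b, c) ∈ B → t < c → (k, c) ∈ B

section

variable {n : ℕ} {M B : Finset (ℕ × ℕ)}

lemma mem_placesA {p : ℕ × ℕ} : p ∈ placesA n ↔ p.1 ≤ n ∧ 1 ≤ p.2 ∧ p.2 < p.1 := by
  unfold placesA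
  simp only [mem_filter, mem_product, mem_range]
  omega

lemma ordA_lt_ordA_of_snd_lt {p q : ℕ × ℕ} (h : p.2 < q.2) : ordA n p < ordA n q := by
  unfold ordA
  nlinarith [Nat.sub_le n p.1]

lemma ordA_mod_add_one {p : ℕ × ℕ} (hp : p ∈ placesA n) : ordA n p % (n + 1) = n - p.1 := by
  rw [mem_placesA] at hp
  rw [ordA, add_comm, Nat.add_mul_mod_self_right, Nat.mod_eq_of_lt (by omega)]

lemma ordA_div_add_one {p : ℕ × ℕ} (hp : p ∈ placesA n) : ordA n p / (n + 1) = p.2 := by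
  rw [mem_placesA] at hp
  rw [ordA, add_comm, Nat.add_mul_div_right _ _ n.succ_pos, Nat.div_eq_of_lt (by omega),
    zero_add]

lemma xiOf_eq_of_forall_ordA_le (hB : B ⊆ placesA n) {q : ℕ × ℕ} (hq : q ∈ B)
    (hmin : ∀ p ∈ B, ordA n q ≤ ordA n p) : xiOf n B = q := by
  have hMin : (B.image (ordA n)).min = ordA n q :=
    le_antisymm (min_le (mem_image_of_mem _ hq))
      (Finset.le_min fun m hm => by
        obtain ⟨p, hp, rfl⟩ := mem_image.1 hm
        exact WithTop.coe_le_coe.2 (hmin p hp))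
  have hm : WithTop.untopD 0 (B.image (ordA n)).min = ordA n q := by rw [hMin]; rfl
  have hqA := mem_placesA.1 (hB hq)
  simp only [xiOf, hm, ordA_mod_add_one (hB hq), ordA_div_add_one (hB hq)]
  exact Prod.ext (by simp only; omega) rfl

lemma xiOf_mem (hB : B ⊆ placesA n) (hne : B.Nonempty) : xiOf n B ∈ B := by
  obtain ⟨q, hq, hmin⟩ := exists_min_image B (ordA n) hne
  rwa [xiOf_eq_of_forall_ordA_le hB hq hmin]

lemma xiOf_snd_le (hB : B ⊆ placesA n) {p : ℕ × ℕ} (hp : p ∈ B) : (xiOf n B).2 ≤ p.2 := by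
  obtain ⟨q, hq, hmin⟩ := exists_min_image B (ordA n) ⟨p, hp⟩
  rw [xiOf_eq_of_forall_ordA_le hB hq hmin]
  by_contra h
  exact (hmin p hp).not_gt (ordA_lt_ordA_of_snd_lt (not_le.1 h))

lemma IsIdealSet.mem_of_le (hM : IsIdealSet n M) {x z k t : ℕ} (hxz : (x, z) ∈ M)
    (hxk : x ≤ k) (hk : k ≤ n) (ht : 1 ≤ t) (htz : t ≤ z) : (k, t) ∈ M := by
  have hkz : (k, z) ∈ M := by
    rcases hxk.eq_or_lt with rfl | h
    · exact hxz
    · exact hM.2.2 _ hxz k h hk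
  rcases htz.eq_or_lt with rfl | h
  · exact hkz
  · exact hM.2.1 _ hkz t ht h

lemma mem_fillStep {p : ℕ × ℕ} :
    p ∈ fillStep n B ↔ p ∈ B ∧ ¬(p = xiOf n B ∨ p ∈ minusSet n B ∨ p ∈ plusSet n B) := by
  rw [fillStep, mem_sdiff, mem_insert, mem_union]

lemma fillStep_subset : fillStep n B ⊆ B := sdiff_subset

lemma mem_fillStep_of_fst_ne_of_snd_ne {p : ℕ × ℕ} (hp : p ∈ B) (h1 : p.1 ≠ (xiOf n B).1)
    (h2 : p.2 ≠ (xiOf n B).2) : p ∈ fillStep n B := by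
  refine mem_fillStep.2 ⟨hp, ?_⟩
  rintro (rfl | hminus | hplus)
  · exact h1 rfl
  · exact h1 (mem_filter.1 hminus).2.1
  · exact h2 (mem_filter.1 hplus).2.1

lemma mem_fillStep_of_fst_eq (hB : B ⊆ placesA n) (hT : IsTransBelow B (xiOf n B).1)
    {x y z : ℕ} (hxy : (x, y) ∈ fillStep n B) (hyz : (y, z) ∈ B) (hxz : (x, z) ∈ B)
    (hx : x = (xiOf n B).1) : (x, z) ∈ fillStep n B := by
  obtain ⟨hxyB, hxy_kept⟩ := mem_fillStep.1 hxy
  have hxyA := mem_placesA.1 (hB hxyB)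
  have hyzA := mem_placesA.1 (hB hyz)
  have htz := xiOf_snd_le hB hxz
  have hminus (h : (y, (xiOf n B).2) ∈ B) : (x, y) ∈ minusSet n B :=
    mem_filter.2 ⟨hxyB, hx, by simp only at *; omega, by simp only at *; omega, h⟩
  refine mem_fillStep.2 ⟨hxz, ?_⟩
  rintro (hξ | hxz_minus | hxz_plus)
  · exact hxy_kept (Or.inr (Or.inl (hminus (by rwa [← hξ]))))
  · obtain ⟨-, -, -, hzk, hzt⟩ := mem_filter.1 hxz_minus
    exact hxy_kept (Or.inr (Or.inl (hminus (hT hyz hzt (by simp only at *; omega)))))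
  · have := (mem_filter.1 hxz_plus).2.2.2.1
    simp only at this; omega

lemma mem_fillStep_of_snd_eq (hB : B ⊆ placesA n)
    (hR : IsRowClosed B (xiOf n B).1 (xiOf n B).2)
    {x y z : ℕ} (hxy : (x, y) ∈ B) (hyz : (y, z) ∈ fillStep n B) (hxz : (x, z) ∈ B)
    (hx : x ≠ (xiOf n B).1) (hz : z = (xiOf n B).2) : (x, z) ∈ fillStep n B := by
  obtain ⟨hyzB, hyz_kept⟩ := mem_fillStep.1 hyz
  have hxyA := mem_placesA.1 (hB hxy)
  have hyzA := mem_placesA.1 (hB hyzB)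
  refine mem_fillStep.2 ⟨hxz, ?_⟩
  rintro (hξ | hxz_minus | hxz_plus)
  · exact hx (by rw [← hξ])
  · exact hx (mem_filter.1 hxz_minus).2.1
  · obtain ⟨-, -, -, hxk, hkx⟩ := mem_filter.1 hxz_plus
    simp only at *
    have hky : ((xiOf n B).1, y) ∈ B := hR hkx hxy (by omega)
    exact hyz_kept (Or.inr (Or.inr (mem_filter.2 ⟨hyzB, hz, by omega, by omega, hky⟩)))

theorem mem_fillStep_trans (hB : B ⊆ placesA n) (hT : IsTransBelow B (xiOf n B).1)
    (hR : IsRowClosed B (xiOf n B).1 (xiOf n B).2) {x y z : ℕ}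
    (hxy : (x, y) ∈ fillStep n B) (hyz : (y, z) ∈ fillStep n B) (hxz : (x, z) ∈ B) :
    (x, z) ∈ fillStep n B := by
  by_cases hx : x = (xiOf n B).1
  · exact mem_fillStep_of_fst_eq hB hT hxy (fillStep_subset hyz) hxz hx
  by_cases hz : z = (xiOf n B).2
  · exact mem_fillStep_of_snd_eq hB hR (fillStep_subset hxy) hyz hxz hx hz
  exact mem_fillStep_of_fst_ne_of_snd_ne hxz hx hz

lemma isTransBelow_of_closed (hM : IsIdealSet n M) (hB : B ⊆ placesA n \ M)
    (hcl : ∀ ⦃x y z⦄, (x, y) ∈ B → (y, z) ∈ B → (x, z) ∈ B ∨ (x, z) ∈ M) :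
    IsTransBelow B (xiOf n B).1 := by
  intro x y z hxy hyz hxk
  refine (hcl hxy hyz).resolve_right fun hxzM => ?_
  have hBA : B ⊆ placesA n := hB.trans sdiff_subset
  have hξ := hB (xiOf_mem hBA ⟨_, hxy⟩)
  have hξA := mem_placesA.1 (mem_sdiff.1 hξ).1
  exact (mem_sdiff.1 hξ).2
    (hM.mem_of_le hxzM hxk.le hξA.1 hξA.2.1 (xiOf_snd_le hBA hyz))

lemma isRowClosed_of_closed (hM : IsIdealSet n M) (hB : B ⊆ placesA n \ M)
    (hcl : ∀ ⦃x y z⦄, (x, y) ∈ B → (y, z) ∈ B → (x, z) ∈ B ∨ (x, z) ∈ M) :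
    IsRowClosed B (xiOf n B).1 (xiOf n B).2 := by
  intro b c hkb hbc htc
  refine (hcl hkb hbc).resolve_right fun hkcM => ?_
  have hξ := hB (xiOf_mem (hB.trans sdiff_subset) ⟨_, hkb⟩)
  have hξA := mem_placesA.1 (mem_sdiff.1 hξ).1
  exact (mem_sdiff.1 hξ).2 (hM.mem_of_le hkcM le_rfl hξA.1 hξA.2.1 htc.le)

lemma Bset_succ (j : ℕ) : Bset n M (j + 1) = fillStep n (Bset n M j) := rfl

lemma Bset_antitone : Antitone (Bset n M) :=
  antitone_nat_of_succ_le fun _ => sdiff_subset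

lemma Bset_subset_sdiff (j : ℕ) : Bset n M j ⊆ placesA n \ M :=
  Bset_antitone (Nat.zero_le j)

theorem Bset_closed (hM : IsIdealSet n M) :
    ∀ (j : ℕ) ⦃x y z : ℕ⦄, (x, y) ∈ Bset n M j → (y, z) ∈ Bset n M j →
      (x, z) ∈ Bset n M j ∨ (x, z) ∈ M
  | 0, x, y, z, hxy, hyz => by
    have hxyA := mem_placesA.1 (mem_sdiff.1 hxy).1
    have hyzA := mem_placesA.1 (mem_sdiff.1 hyz).1
    by_cases hxzM : (x, z) ∈ M
    · exact Or.inr hxzM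
    · exact Or.inl (mem_sdiff.2 ⟨mem_placesA.2 (by simp only at *; omega), hxzM⟩)
  | j + 1, x, y, z, hxy, hyz => by
    rw [Bset_succ] at hxy hyz ⊢
    have hcl := Bset_closed hM j
    refine (hcl (fillStep_subset hxy) (fillStep_subset hyz)).imp (fun hxz => ?_) id
    exact mem_fillStep_trans ((Bset_subset_sdiff j).trans sdiff_subset)
      (isTransBelow_of_closed hM (Bset_subset_sdiff j) hcl)
      (isRowClosed_of_closed hM (Bset_subset_sdiff j) hcl) hxy hyz hxz

end

theorem case6i_general (n : ℕ) (M : Finset (ℕ × ℕ))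
    (hM : IsIdealSet n M)
    (i k t : ℕ)
    (hkt : xiStep n M i = (k, t))
    (a b c : ℕ)
    (h1 : memB11 n M i k t (a, b))
    (h2 : memB12c n M i k t (b, c)) :
    memB11 n M i k t (a, c) := by
  obtain ⟨hab, ha1, hak, -, -, hat, hkb⟩ := h1
  obtain ⟨hbc, -, -, htc, hck, -⟩ := h2
  have hξ : xiOf n (Bset n M (i - 1)) = (k, t) := hkt
  have hsub : Bset n M i ⊆ Bset n M (i - 1) := Bset_antitone (Nat.sub_le i 1)
  have hcl := Bset_closed hM (i - 1)
  have hB := Bset_subset_sdiff (n := n) (M := M) (i - 1)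
  have hac : (a, c) ∈ Bset n M (i - 1) :=
    isTransBelow_of_closed hM hB hcl (hsub hab) (hsub hbc) (by rw [hξ]; exact hak)
  have hkc : (k, c) ∈ Bset n M (i - 1) := by
    have hR := isRowClosed_of_closed hM hB hcl
    rw [hξ] at hR
    exact hR hkb (hsub hbc) htc
  have hac_step : (a, c) ∈ Bset n M (i - 1 + 1) := by
    rw [Bset_succ]
    exact mem_fillStep_of_fst_ne_of_snd_ne hac (by rw [hξ]; simp only; omega)
      (by rw [hξ]; simp only; omega)
  exact ⟨Bset_antitone (by omega : i ≤ i - 1 + 1) hac_step, ha1, hak, htc, hck, hat, hkc⟩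

/-- **Case 6(i).**  Writing `ξ_i = (k,t)`: if `(a,b) ∈ B_i^{(1.1)}` and
`(b,c) ∈ B_i^{(1.2)}` of type (c), then `(a,c) ∈ B_i^{(1.1)}`. -/
theorem case6i (K : Type*) [Field K] [CharZero K]
    (n s : ℕ) (hn : 2 ≤ n) (M : Finset (ℕ × ℕ))
    (hM : IsIdealSet n M) (hs : IsNumSteps n M s)
    (i k t : ℕ) (hi1 : 1 ≤ i) (his : i ≤ s)
    (hkt : xiStep n M i = (k, t))
    (a b c : ℕ)
    (h1 : memB11 n M i k t (a, b))
    (h2 : memB12c n M i k t (b, c)) :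
    memB11 n M i k t (a, c) :=
  case6i_general n M hM i k t hkt a b c h1 h2
end Panov
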